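/- For a bisimplicial set X, the collection Tot_n X = {(x_n,…,x_0) ∈ ∏_{q=n}^{0} X_{q,n−q} : x_q d^h_q = x_{q−1} d^v_0 for all q ∈ [1,n]}, with action (x_q)_q · Tot_θ X = (x_{pθ} X_{Spl_p(θ)})_{p=m,…,0} for monotone θ : [m] → [n], defines a simplicial set (the total simplicial set of Artin–Mazur). -/

import Mathlib

namespace Paper

/-- clamped coface map `δ^k : [a] → [b]`. -/
def δOH (k a b : ℕ) : Fin (a+1) →o Fin (b+1) where
  toFun i := ⟨min (if (i:ℕ) < k then (i:ℕ) else (i:ℕ)+1) b, Nat.lt_succ_of_le (Nat.min_le_right _ _)⟩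
  monotone' := by
    intro i j hij
    have h : (i:ℕ) ≤ (j:ℕ) := hij
    simp only [Fin.mk_le_mk]
    split_ifs <;> omega

/-- clamped codegeneracy map `σ^k : [a] → [b]`. -/
def σOH (k a b : ℕ) : Fin (a+1) →o Fin (b+1) where
  toFun i := ⟨min (if (i:ℕ) ≤ k then (i:ℕ) else (i:ℕ)-1) b, Nat.lt_succ_of_le (Nat.min_le_right _ _)⟩
  monotone' := by
    intro i j hij
    have h : (i:ℕ) ≤ (j:ℕ) := hij
    simp only [Fin.mk_le_mk]
    split_ifs <;> omega

/-- `τ^k : [n] → [1]`, sending `[0, n-k]` to `0` and the rest to `1`. -/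
def τOH (n k : ℕ) : Fin (n+1) →o Fin 2 where
  toFun i := if (i:ℕ) + k ≤ n then 0 else 1
  monotone' := by
    intro i j hij
    have h : (i:ℕ) ≤ (j:ℕ) := hij
    dsimp only
    split_ifs with h1 h2 h3
    · exact le_refl _
    · exact Fin.zero_le _
    · exact absurd h3 (by omega)
    · exact le_refl _

/-- application of `θ : [m] → [n]` to a natural number (clamped). -/
def fApp {m n : ℕ} (θ : Fin (m+1) →o Fin (n+1)) (x : ℕ) : ℕ :=
  (θ ⟨min x m, Nat.lt_succ_of_le (Nat.min_le_right _ _)⟩ : Fin (n+1))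

theorem fApp_mono {m n : ℕ} (θ : Fin (m+1) →o Fin (n+1)) {x y : ℕ} (h : x ≤ y) :
    fApp θ x ≤ fApp θ y :=
  Fin.le_def.mp (θ.monotone (Fin.mk_le_mk.mpr (by omega)))

theorem fApp_le {m n : ℕ} (θ : Fin (m+1) →o Fin (n+1)) (x : ℕ) : fApp θ x ≤ n :=
  Nat.lt_succ_iff.mp (Fin.isLt _)

theorem fApp_coe {m n : ℕ} (θ : Fin (m+1) →o Fin (n+1)) (p : Fin (m+1)) :
    fApp θ (p:ℕ) = (θ p : ℕ) := by
  have hp : (⟨min (p:ℕ) m, Nat.lt_succ_of_le (Nat.min_le_right _ _)⟩ : Fin (m+1)) = p :=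
    Fin.ext (show min (p:ℕ) m = (p:ℕ) from by have := p.isLt; omega)
  unfold fApp
  rw [hp]

/-- `Spl_{≤ p}(θ) : [p] → [pθ]`. -/
def splLe {m n : ℕ} (θ : Fin (m+1) →o Fin (n+1)) (p : Fin (m+1)) :
    Fin ((p:ℕ)+1) →o Fin ((θ p : ℕ)+1) where
  toFun i := ⟨fApp θ (i:ℕ), by
    have h1 : fApp θ (i:ℕ) ≤ fApp θ (p:ℕ) := fApp_mono θ (by have := i.isLt; omega)
    have h2 : fApp θ (p:ℕ) = (θ p : ℕ) := fApp_coe θ p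
    omega⟩
  monotone' := by
    intro a b hab
    have h : (a:ℕ) ≤ (b:ℕ) := hab
    simp only [Fin.mk_le_mk]
    exact fApp_mono θ h

/-- `Spl_{≥ p}(θ) : [m-p] → [n-pθ]`. -/
def splGe {m n : ℕ} (θ : Fin (m+1) →o Fin (n+1)) (p : Fin (m+1)) :
    Fin (m - (p:ℕ) + 1) →o Fin (n - (θ p : ℕ) + 1) where
  toFun i := ⟨fApp θ ((i:ℕ) + (p:ℕ)) - (θ p : ℕ), by
    have h1 : fApp θ ((i:ℕ) + (p:ℕ)) ≤ n := fApp_le θ _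
    omega⟩
  monotone' := by
    intro a b hab
    have h : (a:ℕ) ≤ (b:ℕ) := hab
    simp only [Fin.mk_le_mk]
    have := fApp_mono θ (show (a:ℕ) + (p:ℕ) ≤ (b:ℕ) + (p:ℕ) by omega)
    omega

/-- the restriction `θ|_[i]^[j] : [i] → [j]` of `θ` (clamped). -/
def restrictOH {m n : ℕ} (θ : Fin (m+1) →o Fin (n+1)) (i j : ℕ) : Fin (i+1) →o Fin (j+1) where
  toFun k := ⟨min (fApp θ (k:ℕ)) j, Nat.lt_succ_of_le (Nat.min_le_right _ _)⟩
  monotone' := by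
    intro a b hab
    have h : (a:ℕ) ≤ (b:ℕ) := hab
    simp only [Fin.mk_le_mk]
    have := fApp_mono θ h
    omega

/-- ascending product `f a * f (a+1) * ⋯ * f (b-1)`. -/
def aProd {γ : Type*} [Monoid γ] (f : ℕ → γ) (a : ℕ) : ℕ → γ
  | 0 => 1
  | b+1 => if a ≤ b then aProd f a b * f b else 1

/-- descending product `f (b-1) * f (b-2) * ⋯ * f a`. -/
def dProd {γ : Type*} [Monoid γ] (f : ℕ → γ) (a : ℕ) : ℕ → γ
  | 0 => 1
  | b+1 => if a ≤ b then f b * dProd f a b else 1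

end Paper
namespace Paper

/-- A bisimplicial set, as a contravariant functor in two simplicial directions. -/
structure BiSSet where
  obj : ℕ → ℕ → Type
  map : ∀ {p p' q q' : ℕ}, (Fin (p+1) →o Fin (p'+1)) → (Fin (q+1) →o Fin (q'+1)) →
    obj p' q' → obj p q
  map_id : ∀ {p q : ℕ} (x : obj p q), map OrderHom.id OrderHom.id x = x
  map_comp : ∀ {p p' p'' q q' q'' : ℕ} (α : Fin (p+1) →o Fin (p'+1)) (α' : Fin (p'+1) →o Fin (p''+1))
    (β : Fin (q+1) →o Fin (q'+1)) (β' : Fin (q'+1) →o Fin (q''+1)) (x : obj p'' q''),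
    map α β (map α' β' x) = map (α'.comp α) (β'.comp β) x

namespace BiSSet

/-- horizontal face `d^h_k`. -/
def hface (X : BiSSet) (k : ℕ) {p q : ℕ} (x : X.obj p q) : X.obj (p-1) q :=
  X.map (δOH k (p-1) p) OrderHom.id x

/-- vertical face `d^v_k`. -/
def vface (X : BiSSet) (k : ℕ) {p q : ℕ} (x : X.obj p q) : X.obj p (q-1) :=
  X.map OrderHom.id (δOH k (q-1) q) x

/-- horizontal descending composite `d^h_{i+c} ⋯ d^h_{i+1}`. -/
def hdcomp (X : BiSSet) : (i c : ℕ) → {p q : ℕ} → X.obj p q → X.obj (p - c) q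
  | _, 0, _, _, x => x
  | i, c+1, _, _, x => X.hface (i+1) (X.hdcomp (i+1) c x)

/-- vertical descending composite `d^v_{i+c} ⋯ d^v_{i+1}`. -/
def vdcomp (X : BiSSet) : (i c : ℕ) → {p q : ℕ} → X.obj p q → X.obj p (q - c)
  | _, 0, _, _, x => x
  | i, c+1, _, _, x => X.vface (i+1) (X.vdcomp (i+1) c x)

/-- vertical descending composite `d^v_{c-1} ⋯ d^v_0`. -/
def vd0comp (X : BiSSet) : (c : ℕ) → {p q : ℕ} → X.obj p q → X.obj p (q - c)
  | 0, _, _, x => x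
  | c+1, _, _, x => X.vface 0 (X.vdcomp 0 c x)

/-- the condition defining `Tot_n X ⊆ ∏_{q=n}^{0} X_{q,n-q}`. -/
def totCond (X : BiSSet) (n : ℕ) (x : ∀ q : Fin (n+1), X.obj (q:ℕ) (n - (q:ℕ))) : Prop :=
  ∀ (q : ℕ) (h : q + 1 ≤ n),
    X.map (δOH (q+1) q (q+1)) OrderHom.id (x ⟨q+1, by omega⟩) =
    X.map OrderHom.id (δOH 0 (n - (q+1)) (n - q)) (x ⟨q, by omega⟩)

/-- the structure map `Tot_θ X` on underlying tuples, via the splittings of `θ`. -/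
def totRaw (X : BiSSet) {m n : ℕ} (θ : Fin (m+1) →o Fin (n+1))
    (x : ∀ q : Fin (n+1), X.obj (q:ℕ) (n - (q:ℕ))) : ∀ p : Fin (m+1), X.obj (p:ℕ) (m - (p:ℕ)) :=
  fun p => X.map (splLe θ p) (splGe θ p) (x (θ p))

/-- the components of `φ_X : Diag X → Tot X`,
`x ↦ (x d^h_n ⋯ d^h_{q+1} d^v_{q-1} ⋯ d^v_0)_{q=n,…,0}`. -/
def phiRaw (X : BiSSet) (n : ℕ) (x : X.obj n n) : ∀ q : Fin (n+1), X.obj (q:ℕ) (n - (q:ℕ)) :=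
  fun q => cast
    (congrArg (fun t => X.obj t (n - (q:ℕ))) (Nat.sub_sub_self (Nat.lt_succ_iff.mp q.isLt)))
    (X.vd0comp (q:ℕ) (X.hdcomp (q:ℕ) (n - (q:ℕ)) x))

end BiSSet

/-- morphisms of bisimplicial sets. -/
structure BiHom (X Y : BiSSet) where
  app : ∀ p q, X.obj p q → Y.obj p q
  comm : ∀ {p p' q q' : ℕ} (α : Fin (p+1) →o Fin (p'+1)) (β : Fin (q+1) →o Fin (q'+1))
    (x : X.obj p' q'), app p q (X.map α β x) = Y.map α β (app p' q' x)

end Paper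

/-! The structure maps are functorial because splitting is: `Spl_p(θ ∘ ψ)` is `Spl_p(ψ)` followed by
`Spl_{pψ}(θ)`, and `Spl_p(id) = id`. For the defining condition, iterating
`x_{q+1} d^h_{q+1} = x_q d^v_0` shows that it is equivalent to its pairwise form: for `a ≤ b`,
restricting `x_b` horizontally along `[a] ⊆ [b]` agrees with restricting `x_a` vertically along the
shift `i ↦ i + (b - a)`. The pairwise form is preserved by `θ`, because the splittings of `θ` at
`p ≤ p'` intertwine the inclusion and shift for `p, p'` with those for `pθ, p'θ`. -/

namespace Paper

theorem finOrderHom_ext {a b : ℕ} {f g : Fin (a+1) →o Fin (b+1)}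
    (h : ∀ i : Fin (a+1), (f i : ℕ) = g i) : f = g :=
  OrderHom.ext _ _ (funext fun i => Fin.ext (h i))

def inclOH (a b : ℕ) : Fin (a+1) →o Fin (b+1) where
  toFun i := ⟨min (i:ℕ) b, Nat.lt_succ_of_le (Nat.min_le_right _ _)⟩
  monotone' _ _ hij := Fin.mk_le_mk.mpr (min_le_min_right b hij)

def shiftOH (c a b : ℕ) : Fin (a+1) →o Fin (b+1) where
  toFun i := ⟨min ((i:ℕ) + c) b, Nat.lt_succ_of_le (Nat.min_le_right _ _)⟩
  monotone' _ _ hij := Fin.mk_le_mk.mpr (min_le_min_right b (Nat.add_le_add_right hij c))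

@[simp] theorem δOH_val (k a b : ℕ) (i : Fin (a+1)) :
    (δOH k a b i : ℕ) = min (if (i:ℕ) < k then (i:ℕ) else (i:ℕ) + 1) b := rfl

@[simp] theorem inclOH_val (a b : ℕ) (i : Fin (a+1)) : (inclOH a b i : ℕ) = min (i:ℕ) b := rfl

@[simp] theorem shiftOH_val (c a b : ℕ) (i : Fin (a+1)) :
    (shiftOH c a b i : ℕ) = min ((i:ℕ) + c) b := rfl

@[simp] theorem splLe_val {m n : ℕ} (θ : Fin (m+1) →o Fin (n+1)) (p : Fin (m+1))
    (i : Fin ((p:ℕ)+1)) : (splLe θ p i : ℕ) = fApp θ i := rfl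

@[simp] theorem splGe_val {m n : ℕ} (θ : Fin (m+1) →o Fin (n+1)) (p : Fin (m+1))
    (i : Fin (m - (p:ℕ) + 1)) : (splGe θ p i : ℕ) = fApp θ ((i:ℕ) + p) - θ p := rfl

theorem fApp_comp {l m n : ℕ} (ψ : Fin (l+1) →o Fin (m+1)) (θ : Fin (m+1) →o Fin (n+1))
    (x : ℕ) : fApp (θ.comp ψ) x = fApp θ (fApp ψ x) := by
  change (θ (ψ _) : ℕ) = θ _
  congr 2
  exact Fin.ext (Nat.min_eq_left (fApp_le ψ x)).symm

theorem inclOH_self (a : ℕ) : inclOH a a = OrderHom.id :=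
  finOrderHom_ext fun i => by
    have := i.isLt
    simp only [inclOH_val, OrderHom.id_coe, id_eq]
    omega

theorem shiftOH_zero (a : ℕ) : shiftOH 0 a a = OrderHom.id :=
  finOrderHom_ext fun i => by
    have := i.isLt
    simp only [shiftOH_val, OrderHom.id_coe, id_eq]
    omega

theorem inclOH_comp_inclOH {a b c : ℕ} (hab : a ≤ b) :
    (inclOH b c).comp (inclOH a b) = inclOH a c :=
  finOrderHom_ext fun i => by
    have := i.isLt
    simp only [OrderHom.comp_coe, Function.comp_apply, inclOH_val]
    omega

theorem shiftOH_comp_shiftOH {c d a b e : ℕ} (h : a + d ≤ b) :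
    (shiftOH c b e).comp (shiftOH d a b) = shiftOH (d + c) a e :=
  finOrderHom_ext fun i => by
    have := i.isLt
    simp only [OrderHom.comp_coe, Function.comp_apply, shiftOH_val]
    omega

theorem δOH_succ_eq_inclOH (q : ℕ) : δOH (q+1) q (q+1) = inclOH q (q+1) :=
  finOrderHom_ext fun i => by
    simp only [δOH_val, inclOH_val, if_pos i.isLt]

theorem δOH_zero_eq_shiftOH (a b : ℕ) : δOH 0 a b = shiftOH 1 a b :=
  finOrderHom_ext fun i => by
    simp only [δOH_val, shiftOH_val, Nat.not_lt_zero, if_false]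

section Splitting

variable {l m n : ℕ}

theorem splLe_id (p : Fin (n+1)) : splLe OrderHom.id p = OrderHom.id :=
  finOrderHom_ext fun i => by
    change min (i:ℕ) n = i
    omega

theorem splGe_id (p : Fin (n+1)) : splGe OrderHom.id p = OrderHom.id :=
  finOrderHom_ext fun i => by
    change min ((i:ℕ) + p) n - p = i
    omega

theorem splLe_comp (ψ : Fin (l+1) →o Fin (m+1)) (θ : Fin (m+1) →o Fin (n+1)) (p : Fin (l+1)) :
    splLe (θ.comp ψ) p = (splLe θ (ψ p)).comp (splLe ψ p) :=
  finOrderHom_ext fun i => fApp_comp ψ θ i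

theorem splGe_comp (ψ : Fin (l+1) →o Fin (m+1)) (θ : Fin (m+1) →o Fin (n+1)) (p : Fin (l+1)) :
    splGe (θ.comp ψ) p = (splGe θ (ψ p)).comp (splGe ψ p) :=
  finOrderHom_ext fun i => by
    have hψ : (ψ p : ℕ) ≤ fApp ψ ((i:ℕ) + p) :=
      fApp_coe ψ p ▸ fApp_mono ψ (Nat.le_add_left _ _)
    change fApp (θ.comp ψ) _ - _ = fApp θ (fApp ψ ((i:ℕ) + p) - ψ p + ψ p) - θ (ψ p)
    rw [Nat.sub_add_cancel hψ, fApp_comp]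
    rfl

theorem splLe_comp_inclOH (θ : Fin (m+1) →o Fin (n+1)) {p p' : Fin (m+1)} (hp : p ≤ p') :
    (splLe θ p').comp (inclOH p p') = (inclOH (θ p) (θ p')).comp (splLe θ p) :=
  finOrderHom_ext fun i => by
    have := i.isLt
    have := fApp_coe θ p ▸ fApp_mono θ (show (i:ℕ) ≤ p by omega)
    have hθ : θ p ≤ θ p' := θ.monotone hp
    simp only [OrderHom.comp_coe, Function.comp_apply, splLe_val, inclOH_val]
    rw [Nat.min_eq_left (by omega : (i:ℕ) ≤ p')]
    omega

theorem shiftOH_comp_splGe (θ : Fin (m+1) →o Fin (n+1)) {p p' : Fin (m+1)} (hp : p ≤ p') :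
    (shiftOH (θ p' - θ p) (n - θ p') (n - θ p)).comp (splGe θ p') =
      (splGe θ p).comp (shiftOH (p' - p) (m - p') (m - p)) :=
  finOrderHom_ext fun i => by
    have := i.isLt
    have := fApp_coe θ p' ▸ fApp_mono θ (Nat.le_add_left (p' : ℕ) i)
    have := fApp_le θ ((i:ℕ) + p')
    have hθ : θ p ≤ θ p' := θ.monotone hp
    simp only [OrderHom.comp_coe, Function.comp_apply, splGe_val, shiftOH_val]
    rw [Nat.min_eq_left (by omega : (i:ℕ) + (p' - p) ≤ m - p),
      show (i:ℕ) + (p' - p) + p = i + p' by omega]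
    omega

end Splitting

namespace BiSSet

def totCondPairs (X : BiSSet) (n : ℕ) (x : ∀ q : Fin (n+1), X.obj (q:ℕ) (n - (q:ℕ))) : Prop :=
  ∀ a b : Fin (n+1), a ≤ b →
    X.map (inclOH a b) OrderHom.id (x b) =
      X.map OrderHom.id (shiftOH (b - a) (n - b) (n - a)) (x a)

variable (X : BiSSet) {m n : ℕ}

theorem totCondPairs_of_totCond {x : ∀ q : Fin (n+1), X.obj (q:ℕ) (n - (q:ℕ))}
    (hx : totCond X n x) : totCondPairs X n x := by
  rintro ⟨a, ha⟩ ⟨b, hb⟩ (hab : a ≤ b)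
  dsimp only
  induction b, hab using Nat.le_induction with
  | base => rw [inclOH_self, Nat.sub_self, shiftOH_zero, X.map_id]
  | succ b hab ih =>
    have hstep := hx b (by omega)
    rw [δOH_succ_eq_inclOH, δOH_zero_eq_shiftOH] at hstep
    calc X.map (inclOH a (b+1)) OrderHom.id (x ⟨b+1, hb⟩)
        = X.map (inclOH a b) OrderHom.id (X.map (inclOH b (b+1)) OrderHom.id (x ⟨b+1, hb⟩)) := by
          rw [X.map_comp, inclOH_comp_inclOH hab, OrderHom.comp_id]
      _ = X.map OrderHom.id (shiftOH 1 (n - (b+1)) (n - b))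
            (X.map (inclOH a b) OrderHom.id (x ⟨b, by omega⟩)) := by
          rw [hstep]
          simp only [X.map_comp, OrderHom.comp_id, OrderHom.id_comp]
      _ = X.map OrderHom.id (shiftOH (b + 1 - a) (n - (b+1)) (n - a)) (x ⟨a, ha⟩) := by
          rw [ih (by omega), X.map_comp, OrderHom.comp_id,
            shiftOH_comp_shiftOH (by omega), Nat.add_comm 1, Nat.sub_add_comm hab]

theorem totCond_of_totCondPairs {x : ∀ q : Fin (n+1), X.obj (q:ℕ) (n - (q:ℕ))}
    (hx : totCondPairs X n x) : totCond X n x := by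
  intro q hq
  have := hx ⟨q, by omega⟩ ⟨q+1, by omega⟩ (Nat.le_succ q)
  simpa only [δOH_succ_eq_inclOH, δOH_zero_eq_shiftOH, Fin.val_mk, Nat.add_sub_cancel_left]
    using this

theorem totCondPairs_totRaw (θ : Fin (m+1) →o Fin (n+1))
    {x : ∀ q : Fin (n+1), X.obj (q:ℕ) (n - (q:ℕ))} (hx : totCondPairs X n x) :
    totCondPairs X m (totRaw X θ x) := by
  intro p p' hp
  calc X.map (inclOH p p') OrderHom.id (X.map (splLe θ p') (splGe θ p') (x (θ p')))
      = X.map (splLe θ p) (splGe θ p') (X.map (inclOH (θ p) (θ p')) OrderHom.id (x (θ p'))) := by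
        rw [X.map_comp, X.map_comp, splLe_comp_inclOH θ hp, OrderHom.comp_id, OrderHom.id_comp]
    _ = X.map (splLe θ p) (splGe θ p')
          (X.map OrderHom.id (shiftOH (θ p' - θ p) (n - θ p') (n - θ p)) (x (θ p))) := by
        rw [hx _ _ (θ.monotone hp)]
    _ = X.map OrderHom.id (shiftOH (p' - p) (m - p') (m - p))
          (X.map (splLe θ p) (splGe θ p) (x (θ p))) := by
        rw [X.map_comp, X.map_comp, shiftOH_comp_splGe θ hp, OrderHom.comp_id, OrderHom.id_comp]

theorem totCond_totRaw (θ : Fin (m+1) →o Fin (n+1))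
    {x : ∀ q : Fin (n+1), X.obj (q:ℕ) (n - (q:ℕ))} (hx : totCond X n x) : totCond X m (totRaw X θ x) :=
  totCond_of_totCondPairs X (totCondPairs_totRaw X θ (totCondPairs_of_totCond X hx))

theorem totRaw_id (x : ∀ q : Fin (n+1), X.obj (q:ℕ) (n - (q:ℕ))) :
    totRaw X OrderHom.id x = x :=
  funext fun p => by
    simp only [totRaw, splLe_id, splGe_id]
    exact X.map_id _

theorem totRaw_comp {l : ℕ} (ψ : Fin (l+1) →o Fin (m+1))
    (θ : Fin (m+1) →o Fin (n+1)) (x : ∀ q : Fin (n+1), X.obj (q:ℕ) (n - (q:ℕ))) :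
    totRaw X ψ (totRaw X θ x) = totRaw X (θ.comp ψ) x :=
  funext fun p => by
    simp only [totRaw, X.map_comp, splLe_comp, splGe_comp]
    rfl

end BiSSet

end Paper
open Paper Paper.BiSSet in
/-- the Artin–Mazur total simplicial set of a bisimplicial set is a
simplicial set: the structure maps preserve the defining compatibility condition,
and they are functorial. -/
theorem stmt_3 (X : BiSSet) :
    (∀ {m n : ℕ} (θ : Fin (m+1) →o Fin (n+1)) (x : ∀ q : Fin (n+1), X.obj (q:ℕ) (n - (q:ℕ))),
      totCond X n x → totCond X m (totRaw X θ x)) ∧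
    (∀ {n : ℕ} (x : ∀ q : Fin (n+1), X.obj (q:ℕ) (n - (q:ℕ))),
      totRaw X OrderHom.id x = x) ∧
    (∀ {l m n : ℕ} (ψ : Fin (l+1) →o Fin (m+1)) (θ : Fin (m+1) →o Fin (n+1))
      (x : ∀ q : Fin (n+1), X.obj (q:ℕ) (n - (q:ℕ))),
      totRaw X ψ (totRaw X θ x) = totRaw X (θ.comp ψ) x) :=
  ⟨fun θ _ => totCond_totRaw X θ, totRaw_id X, totRaw_comp X⟩
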